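/- Let n ≥ 1, let F be a cdf which is continuous on ℝ, let G_1,…,G_m be cdfs, and let 𝒰, ϑ : [0,1]^m → ℝ and μ_j, ℓ_j, m_j, ν_j : [0,1]^m → EReal (j = 1,…,n) satisfy the hypotheses (d1)–(d10) of Corollary 1.2 (𝒰, ϑ non-negative; 𝒰, μ_j, m_j non-decreasing and ϑ, ν_j, ℓ_j non-increasing in each variable; all continuous; and conditions (d3)–(d9) on the boundary values at (0,…,0) and (1,…,1) as in Corollary 1.2), and let H(x) = 𝒰(·)(x)·Σ_{j=1}^n (F̄(μ_j(·)(x)) − F̄(ℓ_j(·)(x))) − ϑ(·)(x)·Σ_{j=1}^n (F̄(ν_j(·)(x)) − F̄(m_j(·)(x))) with (·)(x) = (G_1(x),…,G_m(x)). Assume moreover: (f1) the support S_F is a convex subset of ℝ; (f2) either [μ_n(1,…,1) = sup{x : F(x) < 1}, ℓ_1(1,…,1) = inf{x : F(x) > 0}, 𝒰(·)(x) > 0 for all x ∈ ℝ, and for some j the function μ_j or the function ℓ_j is strictly monotonic], or [ν_n(0,…,0) = sup{x : F(x) < 1}, m_1(0,…,0) = inf{x : F(x) > 0}, ϑ(·)(x)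 > 0 for all x ∈ ℝ, and for some j the function ν_j or the function m_j is strictly monotonic]. Then S_H = S_{G_1} ∪ ⋯ ∪ S_{G_m}. -/
import Mathlib


open Filter Topology Set BigOperators unitInterval

/-- A cumulative distribution function: non-decreasing, right-continuous,
tending to 0 at `-∞` and to 1 at `+∞`. -/
def IsCDF (F : ℝ → ℝ) : Prop :=
  Monotone F ∧ (∀ x : ℝ, ContinuousWithinAt F (Set.Ici x) x) ∧
    Tendsto F atBot (nhds 0) ∧ Tendsto F atTop (nhds 1)

/-- The extension of a cdf to the extended reals, with value 0 at `⊥` and 1 at `⊤`. -/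
noncomputable def extCDF (F : ℝ → ℝ) (a : EReal) : ℝ :=
  if a = ⊥ then 0 else if a = ⊤ then 1 else F a.toReal

/-- The support of a function `F : ℝ → ℝ`:
`S_F = {x | F(x) − F(x − ε) > 0 for every ε > 0}`. -/
def cdfSupport (F : ℝ → ℝ) : Set ℝ :=
  {x | ∀ ε > (0 : ℝ), 0 < F x - F (x - ε)}

/-- there is a support point in (p, q] whenever F p < F q -/
lemma thm4_exists_supp (F : ℝ → ℝ) (hm : Monotone F) (hc : Continuous F)
    {p q : ℝ} (hpq : p < q) (h : F p < F q) :
    ∃ s, s ∈ cdfSupport F ∧ p < s ∧ s ≤ q := by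
  set c := (F p + F q) / 2 with hcdef
  have hcp : F p < c := by rw [hcdef]; linarith
  have hcq : c ≤ F q := by rw [hcdef]; linarith
  set S : Set ℝ := {x | c ≤ F x} with hS
  have hqS : q ∈ S := hcq
  have hlb : p ∈ lowerBounds S := by
    intro x hx
    by_contra hxp
    push_neg at hxp
    have h1 : F x ≤ F p := hm hxp.le
    have h2 : c ≤ F x := hx
    linarith
  have hbdd : BddBelow S := ⟨p, hlb⟩
  have hne : S.Nonempty := ⟨q, hqS⟩
  have hsq : sInf S ≤ q := csInf_le hbdd hqS
  have hps : p ≤ sInf S := le_csInf hne hlb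
  have hFs : c ≤ F (sInf S) := by
    by_contra hlt
    push_neg at hlt
    have hopen : IsOpen {y | F y < c} := isOpen_lt hc continuous_const
    obtain ⟨δ, hδ, hball⟩ := Metric.isOpen_iff.mp hopen (sInf S) hlt
    obtain ⟨x, hxS, hxlt⟩ := (csInf_lt_iff hbdd hne).mp
      (show sInf S < sInf S + δ by linarith)
    have hsx : sInf S ≤ x := csInf_le hbdd hxS
    have hxball : x ∈ Metric.ball (sInf S) δ := by
      rw [Metric.mem_ball, Real.dist_eq, abs_of_nonneg (by linarith)]
      linarith
    have : F x < c := hball hxball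
    have : c ≤ F x := hxS
    linarith
  have hps' : p < sInf S := by
    rcases lt_or_eq_of_le hps with h' | h'
    · exact h'
    · exfalso; rw [← h'] at hFs; linarith
  refine ⟨sInf S, ?_, hps', hsq⟩
  intro ε hε
  have h1 : ¬ c ≤ F (sInf S - ε) := by
    intro hcon
    have : sInf S ≤ sInf S - ε := csInf_le hbdd hcon
    linarith
  push_neg at h1
  linarith

/-- F is strictly increasing between a point with positive mass on the left
and a point with mass remaining on the right, given convex support -/
lemma thm4_strict (F : ℝ → ℝ) (hm : Monotone F) (hc : Continuous F)
    (hbot : Tendsto F atBot (nhds 0)) (htop : Tendsto F atTop (nhds 1))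
    (hconv : Convex ℝ (cdfSupport F))
    {p q : ℝ} (hpq : p < q) (hq0 : 0 < F q) (hp1 : F p < 1) : F p < F q := by
  by_contra hle
  push_neg at hle
  have heq : F p = F q := le_antisymm (hm hpq.le) hle
  have hp0 : 0 < F p := by rw [heq]; exact hq0
  obtain ⟨y, hy⟩ : ∃ y, F y < F p := (hbot.eventually_lt_const hp0).exists
  have hyp : y < p := by
    by_contra h'
    push_neg at h'
    exact absurd (hm h') (not_le.mpr hy)
  obtain ⟨s1, hs1, _, hs1p⟩ := thm4_exists_supp F hm hc hyp hy
  have hq1 : F q < 1 := by rw [← heq]; exact hp1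
  obtain ⟨z, hz⟩ : ∃ z, F q < F z := (htop.eventually_const_lt hq1).exists
  have hqz : q < z := by
    by_contra h'
    push_neg at h'
    exact absurd (hm h') (not_le.mpr hz)
  obtain ⟨s2, hs2, hqs2, _⟩ := thm4_exists_supp F hm hc hqz hz
  have hOC := hconv.ordConnected
  have hw : (p + q) / 2 ∈ cdfSupport F :=
    hOC.out hs1 hs2 ⟨by linarith, by linarith⟩
  have hcontra := hw ((q - p) / 4) (by linarith)
  have h1 : F ((p + q) / 2) ≤ F q := hm (by linarith)
  have h2 : F p ≤ F ((p + q) / 2 - (q - p) / 4) := hm (by linarith)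
  linarith

lemma thm4_chain {n : ℕ} (f : Fin n → EReal)
    (hstep : ∀ k (hk : k + 1 < n), f ⟨k, Nat.lt_of_succ_lt hk⟩ ≤ f ⟨k + 1, hk⟩) :
    ∀ (k' : ℕ) (hk' : k' < n) (k : ℕ) (hk : k < n), k ≤ k' → f ⟨k, hk⟩ ≤ f ⟨k', hk'⟩ := by
  intro k'
  induction k' with
  | zero =>
    intro hk' k hk hle
    have : k = 0 := Nat.le_zero.mp hle
    subst this
    exact le_rfl
  | succ K ih =>
    intro hk' k hk hle
    rcases Nat.lt_or_ge k (K + 1) with h | h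
    · exact (ih (by omega) k hk (by omega)).trans (hstep K hk')
    · have : k = K + 1 := by omega
      subst this
      exact le_rfl

/-- Theorem 4: under conditions (d1)–(d10) of Corollary 1.2 together with (f1) and
(f2), the support of the generated distribution is the union of the supports of the
baselines: `S_H = S_{G_1} ∪ ⋯ ∪ S_{G_m}`. -/
theorem stmt_11
    (n m : ℕ) (hn : 1 ≤ n)
    (F : ℝ → ℝ) (hF : IsCDF F) (hFc : Continuous F)
    (G : Fin m → ℝ → ℝ) (hG : ∀ i, IsCDF (G i))
    (hG01 : ∀ i (x : ℝ), G i x ∈ unitInterval)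
    (𝒰 ϑ : (Fin m → unitInterval) → ℝ)
    (μ ℓ mm ν : Fin n → (Fin m → unitInterval) → EReal)
    (h𝒰c : Continuous 𝒰) (hϑc : Continuous ϑ)
    (hμc : ∀ j, Continuous (μ j)) (hℓc : ∀ j, Continuous (ℓ j))
    (hmc : ∀ j, Continuous (mm j)) (hνc : ∀ j, Continuous (ν j))
    (d1U : ∀ t, 0 ≤ 𝒰 t) (d1V : ∀ t, 0 ≤ ϑ t)
    (d2U : Monotone 𝒰) (d2μ : ∀ j, Monotone (μ j)) (d2m : ∀ j, Monotone (mm j))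
    (d2ϑ : Antitone ϑ) (d2ν : ∀ j, Antitone (ν j)) (d2ℓ : ∀ j, Antitone (ℓ j))
    (d3 : 𝒰 0 ≠ ϑ 0 →
      (𝒰 0 = 0 ∨ ∀ j, μ j 0 = ℓ j 0) ∧ (ϑ 0 = 0 ∨ ∀ j, mm j 0 = ν j 0))
    (d4 : 𝒰 0 = ϑ 0 → 𝒰 0 ≠ 0 → ∀ j, μ j 0 = ν j 0 ∧ mm j 0 = ℓ j 0)
    (d5a : ∀ j, ℓ j 0 ≤ μ j 0)
    (d5b : ϑ 0 ≠ 0 → ∀ j, mm j 1 ≤ ν j 1)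
    (d6a : sSup ((fun x : ℝ => (x : EReal)) '' {x | F x < 1}) ≤ μ ⟨n - 1, by omega⟩ 1)
    (d6b : ℓ ⟨0, by omega⟩ 1 ≤ sInf ((fun x : ℝ => (x : EReal)) '' {x | 0 < F x}))
    (d7 : 𝒰 1 = 1)
    (d8 : ϑ 1 = 0 ∨ ∀ j, ν j 1 = mm j 1)
    (d9 : ∀ j : Fin n, ∀ h : (j : ℕ) + 1 < n, μ j 1 = ℓ ⟨(j : ℕ) + 1, h⟩ 1)
    (f1 : Convex ℝ (cdfSupport F))
    (f2 : (μ ⟨n - 1, by omega⟩ 1 = sSup ((fun x : ℝ => (x : EReal)) '' {x | F x < 1}) ∧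
            ℓ ⟨0, by omega⟩ 1 = sInf ((fun x : ℝ => (x : EReal)) '' {x | 0 < F x}) ∧
            (∀ x : ℝ, 0 < 𝒰 (fun i => ⟨G i x, hG01 i x⟩)) ∧
            ∃ j : Fin n, StrictMono (μ j) ∨ StrictAnti (ℓ j)) ∨
          (ν ⟨n - 1, by omega⟩ 0 = sSup ((fun x : ℝ => (x : EReal)) '' {x | F x < 1}) ∧
            mm ⟨0, by omega⟩ 0 = sInf ((fun x : ℝ => (x : EReal)) '' {x | 0 < F x}) ∧
            (∀ x : ℝ, 0 < ϑ (fun i => ⟨G i x, hG01 i x⟩)) ∧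
            ∃ j : Fin n, StrictAnti (ν j) ∨ StrictMono (mm j))) :
    cdfSupport (fun x =>
      𝒰 (fun i => ⟨G i x, hG01 i x⟩) *
          ∑ j, (extCDF F (μ j (fun i => ⟨G i x, hG01 i x⟩))
            - extCDF F (ℓ j (fun i => ⟨G i x, hG01 i x⟩)))
        - ϑ (fun i => ⟨G i x, hG01 i x⟩) *
          ∑ j, (extCDF F (ν j (fun i => ⟨G i x, hG01 i x⟩))
            - extCDF F (mm j (fun i => ⟨G i x, hG01 i x⟩))))
      = ⋃ i, cdfSupport (G i) := by
  obtain ⟨hFm, hFrc, hFbot, hFtop⟩ := hF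
  have hF0 : ∀ x, 0 ≤ F x := fun x =>
    le_of_tendsto hFbot (Filter.eventually_atBot.mpr ⟨x, fun y hy => hFm hy⟩)
  have hF1 : ∀ x, F x ≤ 1 := fun x =>
    ge_of_tendsto hFtop (Filter.eventually_atTop.mpr ⟨x, fun y hy => hFm hy⟩)
  set SA := sInf ((fun x : ℝ => (x : EReal)) '' {x | 0 < F x}) with hSA
  set SB := sSup ((fun x : ℝ => (x : EReal)) '' {x | F x < 1}) with hSB
  -- strictness tools
  have hKq : ∀ q : ℝ, SA < (q : EReal) → 0 < F q := by
    intro q hq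
    rw [hSA] at hq
    obtain ⟨e, he, hlt⟩ := sInf_lt_iff.mp hq
    obtain ⟨x, hx, rfl⟩ := he
    exact lt_of_lt_of_le hx (hFm (EReal.coe_lt_coe_iff.mp hlt).le)
  have hKp : ∀ p : ℝ, (p : EReal) < SB → F p < 1 := by
    intro p hp
    rw [hSB] at hp
    obtain ⟨e, he, hlt⟩ := lt_sSup_iff.mp hp
    obtain ⟨x, hx, rfl⟩ := he
    exact lt_of_le_of_lt (hFm (EReal.coe_lt_coe_iff.mp hlt).le) hx
  have hM : Monotone (extCDF F) := by
    intro u v huv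
    by_cases hu : u = ⊥
    · subst hu
      by_cases hv : v = ⊥
      · subst hv; exact le_rfl
      by_cases hv2 : v = ⊤
      · subst hv2; simp [extCDF]
      · simp only [extCDF, if_pos rfl, if_neg hv, if_neg hv2]
        exact hF0 _
    · by_cases hu2 : u = ⊤
      · subst hu2
        have hv2 : v = ⊤ := top_le_iff.mp huv
        subst hv2; exact le_rfl
      · by_cases hv : v = ⊥
        · subst hv; exact absurd (le_bot_iff.mp huv) hu
        by_cases hv2 : v = ⊤
        · subst hv2
          simp only [extCDF, if_neg hu, if_neg hu2, if_pos rfl]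
          simp only [show (⊤ : EReal) ≠ ⊥ by simp, if_false, if_neg hu]
          exact hF1 _
        · simp only [extCDF, if_neg hu, if_neg hu2, if_neg hv, if_neg hv2]
          exact hFm (EReal.toReal_le_toReal huv hu hv2)
  have hK : ∀ u v : EReal, SA ≤ u → u < v → v ≤ SB → extCDF F u < extCDF F v := by
    intro u v hau huv hvb
    by_cases hu : u = ⊥
    · subst hu
      have hv' : v ≠ ⊥ := huv.ne'
      by_cases hv2 : v = ⊤
      · subst hv2; simp [extCDF]
      · have h0 : 0 < F v.toReal := by
          apply hKq
          rw [EReal.coe_toReal hv2 hv']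
          exact lt_of_le_of_lt hau huv
        simp only [extCDF, if_pos rfl, if_neg hv', if_neg hv2]
        exact h0
    · have hu2 : u ≠ ⊤ := huv.ne_top
      have hp1 : F u.toReal < 1 := by
        apply hKp
        rw [EReal.coe_toReal hu2 hu]
        exact lt_of_lt_of_le huv hvb
      by_cases hv2 : v = ⊤
      · subst hv2
        simp only [extCDF, if_neg hu, if_neg hu2, if_pos rfl]
        simp only [show (⊤ : EReal) ≠ ⊥ by simp, if_false, if_neg hu]
        exact hp1
      · have hv' : v ≠ ⊥ := huv.ne_bot
        have h0 : 0 < F v.toReal := by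
          apply hKq
          rw [EReal.coe_toReal hv2 hv']
          exact lt_of_le_of_lt hau huv
        have hpq : (u.toReal : ℝ) < v.toReal := by
          have h' := huv
          rw [← EReal.coe_toReal hu2 hu, ← EReal.coe_toReal hv2 hv'] at h'
          exact EReal.coe_lt_coe_iff.mp h'
        simp only [extCDF, if_neg hu, if_neg hu2, if_neg hv', if_neg hv2]
        exact thm4_strict F hFm hFc hFbot hFtop f1 hpq h0 hp1
  -- order facts on the cube
  have h0le : ∀ u : Fin m → unitInterval, 0 ≤ u := fun u i => unitInterval.nonneg'
  have hle1 : ∀ u : Fin m → unitInterval, u ≤ 1 := fun u i => unitInterval.le_one'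
  have h01 : (0 : Fin m → unitInterval) ≤ 1 := h0le 1
  have hℓμ : ∀ (j : Fin n) (u : Fin m → unitInterval), ℓ j u ≤ μ j u := fun j u =>
    ((d2ℓ j (h0le u)).trans (d5a j)).trans (d2μ j (h0le u))
  have hA0 : ∀ u : Fin m → unitInterval,
      0 ≤ ∑ j, (extCDF F (μ j u) - extCDF F (ℓ j u)) := fun u =>
    Finset.sum_nonneg fun j _ => sub_nonneg.mpr (hM (hℓμ j u))
  have hAle : ∀ u v : Fin m → unitInterval, u ≤ v →
      ∑ j, (extCDF F (μ j u) - extCDF F (ℓ j u)) ≤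
        ∑ j, (extCDF F (μ j v) - extCDF F (ℓ j v)) := by
    intro u v huv
    refine Finset.sum_le_sum fun j _ => ?_
    have h1 := hM (d2μ j huv)
    have h2 := hM (d2ℓ j huv)
    linarith
  have hQanti : ∀ u v : Fin m → unitInterval, u ≤ v →
      ϑ v * ∑ j, (extCDF F (ν j v) - extCDF F (mm j v)) ≤
        ϑ u * ∑ j, (extCDF F (ν j u) - extCDF F (mm j u)) := by
    intro u v huv
    by_cases hϑ0 : ϑ 0 = 0
    · have hz : ∀ w : Fin m → unitInterval, ϑ w = 0 := fun w =>
        le_antisymm (hϑ0 ▸ d2ϑ (h0le w)) (d1V w)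
      rw [hz u, hz v, zero_mul, zero_mul]
    · have hmν : ∀ (j : Fin n) (w : Fin m → unitInterval), mm j w ≤ ν j w := fun j w =>
        ((d2m j (hle1 w)).trans (d5b hϑ0 j)).trans (d2ν j (hle1 w))
      have hBv : 0 ≤ ∑ j, (extCDF F (ν j v) - extCDF F (mm j v)) :=
        Finset.sum_nonneg fun j _ => sub_nonneg.mpr (hM (hmν j v))
      have hBle : ∑ j, (extCDF F (ν j v) - extCDF F (mm j v)) ≤
          ∑ j, (extCDF F (ν j u) - extCDF F (mm j u)) := by
        refine Finset.sum_le_sum fun j _ => ?_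
        have h1 := hM (d2ν j huv)
        have h2 := hM (d2m j huv)
        linarith
      calc ϑ v * ∑ j, (extCDF F (ν j v) - extCDF F (mm j v))
          ≤ ϑ v * ∑ j, (extCDF F (ν j u) - extCDF F (mm j u)) :=
            mul_le_mul_of_nonneg_left hBle (d1V v)
        _ ≤ ϑ u * ∑ j, (extCDF F (ν j u) - extCDF F (mm j u)) :=
            mul_le_mul_of_nonneg_right (d2ϑ huv) (hBv.trans hBle)
  -- the key strict-increase statement
  suffices KEY : ∀ y z : ℝ, y ≤ z → (∃ i, G i y < G i z) →
      𝒰 (fun i => ⟨G i y, hG01 i y⟩) *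
          ∑ j, (extCDF F (μ j (fun i => ⟨G i y, hG01 i y⟩))
            - extCDF F (ℓ j (fun i => ⟨G i y, hG01 i y⟩)))
        - ϑ (fun i => ⟨G i y, hG01 i y⟩) *
          ∑ j, (extCDF F (ν j (fun i => ⟨G i y, hG01 i y⟩))
            - extCDF F (mm j (fun i => ⟨G i y, hG01 i y⟩)))
      < 𝒰 (fun i => ⟨G i z, hG01 i z⟩) *
          ∑ j, (extCDF F (μ j (fun i => ⟨G i z, hG01 i z⟩))
            - extCDF F (ℓ j (fun i => ⟨G i z, hG01 i z⟩)))
        - ϑ (fun i => ⟨G i z, hG01 i z⟩) *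
          ∑ j, (extCDF F (ν j (fun i => ⟨G i z, hG01 i z⟩))
            - extCDF F (mm j (fun i => ⟨G i z, hG01 i z⟩))) by
    ext x
    simp only [cdfSupport, Set.mem_setOf_eq, Set.mem_iUnion]
    constructor
    · intro hx
      by_contra hcon
      push_neg at hcon
      choose E hE1 hE2 using hcon
      obtain ⟨ε, hε, hεle⟩ : ∃ ε : ℝ, 0 < ε ∧ ∀ i, ε ≤ E i := by
        rcases isEmpty_or_nonempty (Fin m) with hme | hme
        · exact ⟨1, one_pos, fun i => (hme.false i).elim⟩
        · refine ⟨Finset.univ.inf' Finset.univ_nonempty E, ?_,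
            fun i => Finset.inf'_le _ (Finset.mem_univ i)⟩
          rw [Finset.lt_inf'_iff]
          exact fun i _ => hE1 i
      have hteq : (fun i => (⟨G i (x - ε), hG01 i (x - ε)⟩ : unitInterval)) =
          fun i => (⟨G i x, hG01 i x⟩ : unitInterval) := by
        funext i
        apply Subtype.ext
        have h1 : G i (x - ε) ≤ G i x := (hG i).1 (by linarith)
        have h2 : G i x ≤ G i (x - ε) := by
          have h3 := hE2 i
          have h4 : G i (x - E i) ≤ G i (x - ε) := (hG i).1 (by linarith [hεle i])
          linarith
        exact le_antisymm h1 h2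
      have h2 := hx ε hε
      rw [hteq, sub_self] at h2
      exact lt_irrefl 0 h2
    · rintro ⟨i, hi⟩ ε hε
      have h1 := hi ε hε
      have h2 := KEY (x - ε) x (by linarith) ⟨i, by linarith⟩
      linarith
  -- prove KEY, splitting on (f2)
  rcases f2 with ⟨hbe, hae, hUpos, j0, hj0⟩ | ⟨hbe, hae, hVpos, j0, hj0⟩
  · -- first alternative of (f2)
    have stepμ : ∀ k (hk : k + 1 < n),
        (fun j : Fin n => μ j 1) ⟨k, Nat.lt_of_succ_lt hk⟩ ≤
          (fun j : Fin n => μ j 1) ⟨k + 1, hk⟩ := by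
      intro k hk
      calc μ ⟨k, Nat.lt_of_succ_lt hk⟩ 1 = ℓ ⟨k + 1, hk⟩ 1 := d9 ⟨k, Nat.lt_of_succ_lt hk⟩ hk
        _ ≤ ℓ ⟨k + 1, hk⟩ 0 := d2ℓ _ h01
        _ ≤ μ ⟨k + 1, hk⟩ 0 := d5a _
        _ ≤ μ ⟨k + 1, hk⟩ 1 := d2μ _ h01
    have chainμ : ∀ j : Fin n, μ j 1 ≤ μ ⟨n - 1, by omega⟩ 1 := fun j =>
      thm4_chain (fun j : Fin n => μ j 1) stepμ (n - 1) (by omega) j.1 j.2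
        (by have := j.isLt; omega)
    have stepℓ : ∀ k (hk : k + 1 < n),
        (fun j : Fin n => ℓ j 1) ⟨k, Nat.lt_of_succ_lt hk⟩ ≤
          (fun j : Fin n => ℓ j 1) ⟨k + 1, hk⟩ := by
      intro k hk
      calc ℓ ⟨k, Nat.lt_of_succ_lt hk⟩ 1 ≤ ℓ ⟨k, Nat.lt_of_succ_lt hk⟩ 0 := d2ℓ _ h01
        _ ≤ μ ⟨k, Nat.lt_of_succ_lt hk⟩ 0 := d5a _
        _ ≤ μ ⟨k, Nat.lt_of_succ_lt hk⟩ 1 := d2μ _ h01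
        _ = ℓ ⟨k + 1, hk⟩ 1 := d9 ⟨k, Nat.lt_of_succ_lt hk⟩ hk
    have chainℓ : ∀ j : Fin n, ℓ (⟨0, by omega⟩ : Fin n) 1 ≤ ℓ j 1 := fun j =>
      thm4_chain (fun j : Fin n => ℓ j 1) stepℓ j.1 j.2 0 (by omega) (Nat.zero_le _)
    have hμub : ∀ (j : Fin n) (u : Fin m → unitInterval), μ j u ≤ SB := by
      intro j u
      calc μ j u ≤ μ j 1 := d2μ j (hle1 u)
        _ ≤ μ ⟨n - 1, by omega⟩ 1 := chainμ j
        _ = SB := hbe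
    have hℓlb : ∀ (j : Fin n) (u : Fin m → unitInterval), SA ≤ ℓ j u := by
      intro j u
      calc SA = ℓ (⟨0, by omega⟩ : Fin n) 1 := hae.symm
        _ ≤ ℓ j 1 := chainℓ j
        _ ≤ ℓ j u := d2ℓ j (hle1 u)
    have hμlb : ∀ (j : Fin n) (u : Fin m → unitInterval), SA ≤ μ j u := fun j u =>
      (hℓlb j u).trans (hℓμ j u)
    have hℓub : ∀ (j : Fin n) (u : Fin m → unitInterval), ℓ j u ≤ SB := fun j u =>
      (hℓμ j u).trans (hμub j u)
    rintro y z hyz ⟨i, hilt⟩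
    set s : Fin m → unitInterval := fun i => ⟨G i y, hG01 i y⟩ with hs
    set t : Fin m → unitInterval := fun i => ⟨G i z, hG01 i z⟩ with ht
    have hstle : s ≤ t := by
      rw [Pi.le_def]
      intro i'
      rw [hs, ht]
      exact Subtype.mk_le_mk.mpr ((hG i').1 hyz)
    have hstne : s ≠ t := by
      intro h
      have h2 := congrFun h i
      rw [hs, ht] at h2
      exact hilt.ne (Subtype.ext_iff.mp h2)
    have hstlt : s < t := lt_of_le_of_ne hstle hstne
    have hterm : ∀ j' : Fin n, extCDF F (μ j' s) - extCDF F (ℓ j' s) ≤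
        extCDF F (μ j' t) - extCDF F (ℓ j' t) := by
      intro j'
      have h1 := hM (d2μ j' hstle)
      have h2 := hM (d2ℓ j' hstle)
      linarith
    have hstrictterm : extCDF F (μ j0 s) - extCDF F (ℓ j0 s) <
        extCDF F (μ j0 t) - extCDF F (ℓ j0 t) := by
      rcases hj0 with hj0 | hj0
      · have h1 := hK (μ j0 s) (μ j0 t) (hμlb j0 s) (hj0 hstlt) (hμub j0 t)
        have h2 := hM (d2ℓ j0 hstle)
        linarith
      · have h1 := hK (ℓ j0 t) (ℓ j0 s) (hℓlb j0 t) (hj0 hstlt) (hℓub j0 s)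
        have h2 := hM (d2μ j0 hstle)
        linarith
    have hAlt : ∑ j, (extCDF F (μ j s) - extCDF F (ℓ j s)) <
        ∑ j, (extCDF F (μ j t) - extCDF F (ℓ j t)) :=
      Finset.sum_lt_sum (fun j' _ => hterm j') ⟨j0, Finset.mem_univ j0, hstrictterm⟩
    have hUs : 0 < 𝒰 s := hUpos y
    have hP : 𝒰 s * ∑ j, (extCDF F (μ j s) - extCDF F (ℓ j s)) <
        𝒰 t * ∑ j, (extCDF F (μ j t) - extCDF F (ℓ j t)) := by
      have h1 : 𝒰 s * ∑ j, (extCDF F (μ j s) - extCDF F (ℓ j s)) <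
          𝒰 s * ∑ j, (extCDF F (μ j t) - extCDF F (ℓ j t)) :=
        mul_lt_mul_of_pos_left hAlt hUs
      have h2 : 𝒰 s * ∑ j, (extCDF F (μ j t) - extCDF F (ℓ j t)) ≤
          𝒰 t * ∑ j, (extCDF F (μ j t) - extCDF F (ℓ j t)) :=
        mul_le_mul_of_nonneg_right (d2U hstle) (hA0 t)
      linarith
    have hQ := hQanti s t hstle
    linarith
  · -- second alternative of (f2)
    have hϑ0 : ϑ 0 ≠ 0 := by
      intro h
      have h1 : ϑ (fun i => ⟨G i 0, hG01 i 0⟩) ≤ ϑ 0 := d2ϑ (h0le _)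
      have h2 := hVpos 0
      rw [h] at h1
      linarith
    have hd5b := d5b hϑ0
    have hmν : ∀ (j : Fin n) (w : Fin m → unitInterval), mm j w ≤ ν j w := fun j w =>
      ((d2m j (hle1 w)).trans (hd5b j)).trans (d2ν j (hle1 w))
    have hB0 : ∀ u : Fin m → unitInterval,
        0 ≤ ∑ j, (extCDF F (ν j u) - extCDF F (mm j u)) := fun u =>
      Finset.sum_nonneg fun j _ => sub_nonneg.mpr (hM (hmν j u))
    rintro y z hyz ⟨i, hilt⟩
    set s : Fin m → unitInterval := fun i => ⟨G i y, hG01 i y⟩ with hs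
    set t : Fin m → unitInterval := fun i => ⟨G i z, hG01 i z⟩ with ht
    have hstle : s ≤ t := by
      rw [Pi.le_def]
      intro i'
      rw [hs, ht]
      exact Subtype.mk_le_mk.mpr ((hG i').1 hyz)
    have hstne : s ≠ t := by
      intro h
      have h2 := congrFun h i
      rw [hs, ht] at h2
      exact hilt.ne (Subtype.ext_iff.mp h2)
    have hstlt : s < t := lt_of_le_of_ne hstle hstne
    by_cases hUV : 𝒰 0 = ϑ 0
    · -- case (d4)
      have hU0 : 𝒰 0 ≠ 0 := by rw [hUV]; exact hϑ0
      have hd4 := d4 hUV hU0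
      have stepν : ∀ k (hk : k + 1 < n),
          (fun j : Fin n => ν j 0) ⟨k, Nat.lt_of_succ_lt hk⟩ ≤
            (fun j : Fin n => ν j 0) ⟨k + 1, hk⟩ := by
        intro k hk
        calc ν ⟨k, Nat.lt_of_succ_lt hk⟩ 0
            = μ ⟨k, Nat.lt_of_succ_lt hk⟩ 0 := (hd4 _).1.symm
          _ ≤ μ ⟨k, Nat.lt_of_succ_lt hk⟩ 1 := d2μ _ h01
          _ = ℓ ⟨k + 1, hk⟩ 1 := d9 ⟨k, Nat.lt_of_succ_lt hk⟩ hk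
          _ ≤ ℓ ⟨k + 1, hk⟩ 0 := d2ℓ _ h01
          _ = mm ⟨k + 1, hk⟩ 0 := ((hd4 _).2).symm
          _ ≤ mm ⟨k + 1, hk⟩ 1 := d2m _ h01
          _ ≤ ν ⟨k + 1, hk⟩ 1 := hd5b _
          _ ≤ ν ⟨k + 1, hk⟩ 0 := d2ν _ h01
      have chainν : ∀ j : Fin n, ν j 0 ≤ ν ⟨n - 1, by omega⟩ 0 := fun j =>
        thm4_chain (fun j : Fin n => ν j 0) stepν (n - 1) (by omega) j.1 j.2
          (by have := j.isLt; omega)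
      have stepm : ∀ k (hk : k + 1 < n),
          (fun j : Fin n => mm j 0) ⟨k, Nat.lt_of_succ_lt hk⟩ ≤
            (fun j : Fin n => mm j 0) ⟨k + 1, hk⟩ := by
        intro k hk
        calc mm ⟨k, Nat.lt_of_succ_lt hk⟩ 0
            ≤ ν ⟨k, Nat.lt_of_succ_lt hk⟩ 0 := hmν _ 0
          _ = μ ⟨k, Nat.lt_of_succ_lt hk⟩ 0 := (hd4 _).1.symm
          _ ≤ μ ⟨k, Nat.lt_of_succ_lt hk⟩ 1 := d2μ _ h01
          _ = ℓ ⟨k + 1, hk⟩ 1 := d9 ⟨k, Nat.lt_of_succ_lt hk⟩ hk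
          _ ≤ ℓ ⟨k + 1, hk⟩ 0 := d2ℓ _ h01
          _ = mm ⟨k + 1, hk⟩ 0 := ((hd4 _).2).symm
      have chainm : ∀ j : Fin n, mm (⟨0, by omega⟩ : Fin n) 0 ≤ mm j 0 := fun j =>
        thm4_chain (fun j : Fin n => mm j 0) stepm j.1 j.2 0 (by omega) (Nat.zero_le _)
      have hνub : ∀ (j : Fin n) (u : Fin m → unitInterval), ν j u ≤ SB := by
        intro j u
        calc ν j u ≤ ν j 0 := d2ν j (h0le u)
          _ ≤ ν ⟨n - 1, by omega⟩ 0 := chainν j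
          _ = SB := hbe
      have hmlb : ∀ (j : Fin n) (u : Fin m → unitInterval), SA ≤ mm j u := by
        intro j u
        calc SA = mm (⟨0, by omega⟩ : Fin n) 0 := hae.symm
          _ ≤ mm j 0 := chainm j
          _ ≤ mm j u := d2m j (h0le u)
      have hνlb : ∀ (j : Fin n) (u : Fin m → unitInterval), SA ≤ ν j u := fun j u =>
        (hmlb j u).trans (hmν j u)
      have hmub : ∀ (j : Fin n) (u : Fin m → unitInterval), mm j u ≤ SB := fun j u =>
        (hmν j u).trans (hνub j u)
      have htermB : ∀ j' : Fin n, extCDF F (ν j' t) - extCDF F (mm j' t) ≤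
          extCDF F (ν j' s) - extCDF F (mm j' s) := by
        intro j'
        have h1 := hM (d2ν j' hstle)
        have h2 := hM (d2m j' hstle)
        linarith
      have hstrictterm : extCDF F (ν j0 t) - extCDF F (mm j0 t) <
          extCDF F (ν j0 s) - extCDF F (mm j0 s) := by
        rcases hj0 with hj0 | hj0
        · have h1 := hK (ν j0 t) (ν j0 s) (hνlb j0 t) (hj0 hstlt) (hνub j0 s)
          have h2 := hM (d2m j0 hstle)
          linarith
        · have h1 := hK (mm j0 s) (mm j0 t) (hmlb j0 s) (hj0 hstlt) (hmub j0 t)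
          have h2 := hM (d2ν j0 hstle)
          linarith
      have hBlt : ∑ j, (extCDF F (ν j t) - extCDF F (mm j t)) <
          ∑ j, (extCDF F (ν j s) - extCDF F (mm j s)) :=
        Finset.sum_lt_sum (fun j' _ => htermB j') ⟨j0, Finset.mem_univ j0, hstrictterm⟩
      have hVt : 0 < ϑ t := hVpos z
      have hQ : ϑ t * ∑ j, (extCDF F (ν j t) - extCDF F (mm j t)) <
          ϑ s * ∑ j, (extCDF F (ν j s) - extCDF F (mm j s)) := by
        have h1 : ϑ t * ∑ j, (extCDF F (ν j t) - extCDF F (mm j t)) <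
            ϑ t * ∑ j, (extCDF F (ν j s) - extCDF F (mm j s)) :=
          mul_lt_mul_of_pos_left hBlt hVt
        have h2 : ϑ t * ∑ j, (extCDF F (ν j s) - extCDF F (mm j s)) ≤
            ϑ s * ∑ j, (extCDF F (ν j s) - extCDF F (mm j s)) :=
          mul_le_mul_of_nonneg_right (d2ϑ hstle) (hB0 s)
        linarith
      have hP : 𝒰 s * ∑ j, (extCDF F (μ j s) - extCDF F (ℓ j s)) ≤
          𝒰 t * ∑ j, (extCDF F (μ j t) - extCDF F (ℓ j t)) :=
        mul_le_mul (d2U hstle) (hAle s t hstle) (hA0 s) (d1U t)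
      linarith
    · -- case (d3): degenerate, contradiction with strict monotonicity
      obtain ⟨-, h2⟩ := d3 hUV
      rcases h2 with h2 | h2
      · exact absurd h2 hϑ0
      have hcon : ∀ (j : Fin n) (u : Fin m → unitInterval), ν j u = mm j u := by
        intro j u
        refine le_antisymm ?_ (hmν j u)
        calc ν j u ≤ ν j 0 := d2ν j (h0le u)
          _ = mm j 0 := (h2 j).symm
          _ ≤ mm j u := d2m j (h0le u)
      rcases hj0 with hj0 | hj0
      · have hlt := hj0 hstlt
        rw [hcon j0 t, hcon j0 s] at hlt
        exact absurd (d2m j0 hstle) (not_le.mpr hlt)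
      · have hlt := hj0 hstlt
        have h3 := d2ν j0 hstle
        rw [hcon j0 t, hcon j0 s] at h3
        exact absurd h3 (not_le.mpr hlt)
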